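/- arXiv:1901.04008 — 3 statements merged into one kernel-verified Lean document; each statement's English description precedes it below -/
import Mathlib

section
/- Let G be a finite simple graph with vertex weights w and let δ be a nonnegative edge-weight function on G that is G-valid. Then for every vertex cover C of G, the total weight of the set S_δ of tight vertices satisfies Σ_{v ∈ S_δ} w(v) ≤ 2 · Σ_{v ∈ C} w(v). In particular, Σ_{v ∈ S_δ} w(v) is at most twice the minimum weight of a vertex cover of G. -/
/-!
Every tight vertex `v ∈ S` has `w v` at most its load `∑_{e ∋ v} δ e`, and summing the loads of
all vertices counts each edge twice, so `∑_S w ≤ 2 ∑_E δ`. A vertex cover meets every edge, so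
`∑_E δ` is at most the total load of `C`, which validity bounds by `∑_C w`.
-/

open Finset

namespace Sym2

variable {V M : Type*} [DecidableEq V] [AddCommMonoid M]

theorem sum_sum_filter_mem_eq_sum_card_smul (A : Finset V) (E : Finset (Sym2 V))
    (f : Sym2 V → M) :
    ∑ v ∈ A, ∑ e ∈ E with v ∈ e, f e = ∑ e ∈ E, #{v ∈ A | v ∈ e} • f e := by
  rw [sum_comm' (t' := E) (s' := fun e => {v ∈ A | v ∈ e}) (fun _ _ => by simp only [mem_filter]; tauto)]
  simp only [sum_const]

theorem sum_le_sum_sum_filter_mem [PartialOrder M] [IsOrderedAddMonoid M]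
    {C : Finset V} {E : Finset (Sym2 V)} {f : Sym2 V → M} (hf : ∀ e ∈ E, 0 ≤ f e)
    (hC : ∀ e ∈ E, ∃ v ∈ C, v ∈ e) :
    ∑ e ∈ E, f e ≤ ∑ v ∈ C, ∑ e ∈ E with v ∈ e, f e := by
  rw [sum_sum_filter_mem_eq_sum_card_smul]
  refine sum_le_sum fun e he => ?_
  obtain ⟨v, hv, hve⟩ := hC e he
  have hcard : 1 ≤ #{v ∈ C | v ∈ e} := one_le_card.mpr ⟨v, mem_filter.mpr ⟨hv, hve⟩⟩
  simpa using nsmul_le_nsmul_left (hf e he) hcard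

end Sym2

namespace SimpleGraph

variable {V R : Type*} [Fintype V] [DecidableEq V] [Semiring R]

theorem sum_sum_filter_mem_edgeFinset_eq_two_mul (G : SimpleGraph V) [DecidableRel G.Adj]
    (f : Sym2 V → R) :
    ∑ v, ∑ e ∈ G.edgeFinset with v ∈ e, f e = 2 * ∑ e ∈ G.edgeFinset, f e := by
  rw [Sym2.sum_sum_filter_mem_eq_sum_card_smul, mul_sum]
  refine sum_congr rfl fun e he => ?_
  have hends : #{v | v ∈ e} = 2 := by
    rw [← Sym2.card_toFinset_of_not_isDiag e (G.not_isDiag_of_mem_edgeFinset he)]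
    congr 1
    ext v
    simp
  rw [hends, two_nsmul, two_mul]

end SimpleGraph

theorem tight_vertices_weight_le_two_mul_cover_weight_general
    {V : Type*} [Fintype V] [DecidableEq V]
    (G : SimpleGraph V) [DecidableRel G.Adj]
    (w : V → ℝ)
    (δ : Sym2 V → ℝ) (hδ : ∀ e ∈ G.edgeFinset, 0 ≤ δ e)
    (hvalid : ∀ v, ∑ e ∈ G.edgeFinset.filter (fun e => v ∈ e), δ e ≤ w v)
    (S : Finset V)
    (hS : ∀ v, v ∈ S ↔ w v ≤ ∑ e ∈ G.edgeFinset.filter (fun e => v ∈ e), δ e)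
    (C : Finset V) (hC : ∀ e ∈ G.edgeSet, ∃ v ∈ C, v ∈ e) :
    ∑ v ∈ S, w v ≤ 2 * ∑ v ∈ C, w v := by
  have hload_nonneg (v : V) : 0 ≤ ∑ e ∈ G.edgeFinset with v ∈ e, δ e :=
    sum_nonneg fun e he => hδ e (mem_filter.mp he).1
  calc ∑ v ∈ S, w v ≤ ∑ v ∈ S, ∑ e ∈ G.edgeFinset with v ∈ e, δ e :=
        sum_le_sum fun v hv => (hS v).mp hv
    _ ≤ ∑ v, ∑ e ∈ G.edgeFinset with v ∈ e, δ e :=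
        sum_le_sum_of_subset_of_nonneg (subset_univ S) fun v _ _ => hload_nonneg v
    _ = 2 * ∑ e ∈ G.edgeFinset, δ e := G.sum_sum_filter_mem_edgeFinset_eq_two_mul δ
    _ ≤ 2 * ∑ v ∈ C, ∑ e ∈ G.edgeFinset with v ∈ e, δ e := by
        gcongr
        exact Sym2.sum_le_sum_sum_filter_mem hδ fun e he => hC e (G.mem_edgeFinset.mp he)
    _ ≤ 2 * ∑ v ∈ C, w v := by
        gcongr with v
        exact hvalid v

/-- If `δ` is a nonnegative `G`-valid edge-weight function, then the total
weight of the set `S` of tight vertices is at most twice the weight of any vertex cover. -/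
theorem tight_vertices_weight_le_two_mul_cover_weight
    {V : Type*} [Fintype V] [DecidableEq V]
    (G : SimpleGraph V) [DecidableRel G.Adj]
    (w : V → ℝ) (hw : ∀ v, 0 < w v)
    (δ : Sym2 V → ℝ) (hδ : ∀ e ∈ G.edgeFinset, 0 ≤ δ e)
    (hvalid : ∀ v, ∑ e ∈ G.edgeFinset.filter (fun e => v ∈ e), δ e ≤ w v)
    (S : Finset V)
    (hS : ∀ v, v ∈ S ↔ w v ≤ ∑ e ∈ G.edgeFinset.filter (fun e => v ∈ e), δ e)
    (C : Finset V) (hC : ∀ e ∈ G.edgeSet, ∃ v ∈ C, v ∈ e) :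
    ∑ v ∈ S, w v ≤ 2 * ∑ v ∈ C, w v :=
  tight_vertices_weight_le_two_mul_cover_weight_general G w δ hδ hvalid S hS C hC
end

section
/- Let G be a finite simple graph with vertex weights w and let δ be a nonnegative edge-weight function on G that is G-valid. If the set S_δ of tight vertices is a vertex cover of G, then S_δ is a 2-approximation of the minimum weight vertex cover: S_δ is a vertex cover and Σ_{v ∈ S_δ} w(v) ≤ 2 · Σ_{v ∈ C} w(v) for every vertex cover C of G. -/
/-!
Sum the edge weights `δ` in two ways. Each tight vertex has weight at most its load (the
`δ`-weight of its incident edges), and an edge is counted in the loads of at most its two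
endpoints, so `w(S) ≤ 2 ∑ δ`. Conversely each edge has an endpoint in the cover `C`, and
validity bounds each load by the weight, so `∑ δ ≤ w(C)`.
-/

open Finset

namespace Sym2

variable {V M : Type*} [DecidableEq V]

theorem card_filter_mem_le_two (T : Finset V) (e : Sym2 V) : #{v ∈ T | v ∈ e} ≤ 2 := by
  calc #{v ∈ T | v ∈ e} ≤ #e.toFinset :=
        card_le_card fun v hv => mem_toFinset.2 (mem_filter.1 hv).2
    _ ≤ 2 := by rw [card_toFinset]; split_ifs <;> norm_num

variable [AddCommMonoid M]

theorem sum_sum_incident_eq_sum_card_nsmul (T : Finset V) (E : Finset (Sym2 V))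
    (δ : Sym2 V → M) :
    ∑ v ∈ T, ∑ e ∈ E with v ∈ e, δ e = ∑ e ∈ E, #{v ∈ T | v ∈ e} • δ e := by
  rw [sum_comm' (t' := E) (s' := fun e => {v ∈ T | v ∈ e}) (by simp only [mem_filter]; tauto)]
  simp only [sum_const]

variable [PartialOrder M] [IsOrderedAddMonoid M]

theorem sum_sum_incident_le_two_nsmul (T : Finset V) (E : Finset (Sym2 V))
    {δ : Sym2 V → M} (hδ : ∀ e ∈ E, 0 ≤ δ e) :
    ∑ v ∈ T, ∑ e ∈ E with v ∈ e, δ e ≤ 2 • ∑ e ∈ E, δ e := by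
  rw [sum_sum_incident_eq_sum_card_nsmul, ← sum_nsmul]
  exact sum_le_sum fun e he => nsmul_le_nsmul_left (hδ e he) (card_filter_mem_le_two T e)

theorem sum_le_sum_sum_incident_of_cover {C : Finset V} {E : Finset (Sym2 V)}
    (hC : ∀ e ∈ E, ∃ v ∈ C, v ∈ e) {δ : Sym2 V → M} (hδ : ∀ e ∈ E, 0 ≤ δ e) :
    ∑ e ∈ E, δ e ≤ ∑ v ∈ C, ∑ e ∈ E with v ∈ e, δ e := by
  rw [sum_sum_incident_eq_sum_card_nsmul]
  refine sum_le_sum fun e he => ?_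
  obtain ⟨v, hvC, hve⟩ := hC e he
  have hpos : 0 < #{v ∈ C | v ∈ e} := card_pos.2 ⟨v, mem_filter.2 ⟨hvC, hve⟩⟩
  simpa using nsmul_le_nsmul_left (hδ e he) hpos

end Sym2

theorem tight_vertices_two_approx_mwvc_general
    {V : Type*} [Fintype V] [DecidableEq V]
    (G : SimpleGraph V) [DecidableRel G.Adj]
    (w : V → ℝ)
    (δ : Sym2 V → ℝ) (hδ : ∀ e ∈ G.edgeFinset, 0 ≤ δ e)
    (hvalid : ∀ v, ∑ e ∈ G.edgeFinset.filter (fun e => v ∈ e), δ e ≤ w v)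
    (S : Finset V)
    (hS : ∀ v, v ∈ S ↔ w v ≤ ∑ e ∈ G.edgeFinset.filter (fun e => v ∈ e), δ e)
    (hcover : ∀ e ∈ G.edgeSet, ∃ v ∈ S, v ∈ e) :
    (∀ e ∈ G.edgeSet, ∃ v ∈ S, v ∈ e) ∧
      ∀ C : Finset V, (∀ e ∈ G.edgeSet, ∃ v ∈ C, v ∈ e) →
        ∑ v ∈ S, w v ≤ 2 * ∑ v ∈ C, w v := by
  refine ⟨hcover, fun C hC => ?_⟩
  have hC' : ∀ e ∈ G.edgeFinset, ∃ v ∈ C, v ∈ e := fun e he => hC e (G.mem_edgeFinset.1 he)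
  calc ∑ v ∈ S, w v ≤ ∑ v ∈ S, ∑ e ∈ G.edgeFinset with v ∈ e, δ e :=
        sum_le_sum fun v hv => (hS v).1 hv
    _ ≤ 2 • ∑ e ∈ G.edgeFinset, δ e := Sym2.sum_sum_incident_le_two_nsmul S _ hδ
    _ ≤ 2 • ∑ v ∈ C, ∑ e ∈ G.edgeFinset with v ∈ e, δ e :=
        nsmul_le_nsmul_right (Sym2.sum_le_sum_sum_incident_of_cover hC' hδ) 2
    _ ≤ 2 • ∑ v ∈ C, w v := nsmul_le_nsmul_right (sum_le_sum fun v _ => hvalid v) 2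
    _ = 2 * ∑ v ∈ C, w v := by rw [two_nsmul, two_mul]

/-- If `δ` is a nonnegative `G`-valid edge-weight function and the set `S` of
tight vertices is a vertex cover, then `S` is a 2-approximation of the minimum weight
vertex cover. -/
theorem tight_vertices_two_approx_mwvc
    {V : Type*} [Fintype V] [DecidableEq V]
    (G : SimpleGraph V) [DecidableRel G.Adj]
    (w : V → ℝ) (hw : ∀ v, 0 < w v)
    (δ : Sym2 V → ℝ) (hδ : ∀ e ∈ G.edgeFinset, 0 ≤ δ e)
    (hvalid : ∀ v, ∑ e ∈ G.edgeFinset.filter (fun e => v ∈ e), δ e ≤ w v)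
    (S : Finset V)
    (hS : ∀ v, v ∈ S ↔ w v ≤ ∑ e ∈ G.edgeFinset.filter (fun e => v ∈ e), δ e)
    (hcover : ∀ e ∈ G.edgeSet, ∃ v ∈ S, v ∈ e) :
    (∀ e ∈ G.edgeSet, ∃ v ∈ S, v ∈ e) ∧
      ∀ C : Finset V, (∀ e ∈ G.edgeSet, ∃ v ∈ C, v ∈ e) →
        ∑ v ∈ S, w v ≤ 2 * ∑ v ∈ C, w v :=
  tight_vertices_two_approx_mwvc_general G w δ hδ hvalid S hS hcover
end

section
/- Fix positive integers γ and n and let h(i) = i mod 3γn. For all natural numbers i < i' with i' − i ≤ γn, it holds that h(i) ≺_h h(i'). That is, the hash h preserves the natural order of round numbers whose difference is at most γn. -/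
/-- The order `≺_h` on hashed timestamp values in `{0, …, 3γn − 1}`. -/
def PrecH (γ n a b : ℕ) : Prop :=
  (a < b ∧ b ≤ 2 * γ * n) ∨
    (γ * n ≤ a ∧ a < b ∧ b ≤ 3 * γ * n) ∨
    (2 * γ * n ≤ a ∧ a < 3 * γ * n ∧ b < γ * n)

/-! A step `d ≤ γn` from `i` to `i + d` either stays inside the window `[0, 3γn)`, where the
two overlapping intervals `[0, 2γn]` and `[γn, 3γn]` of `≺_h` cover every pair at distance
at most `γn`, or it wraps around, which forces `i mod 3γn ≥ 2γn` and `(i + d) mod 3γn < γn`. -/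

section PrecH

variable {γ n a d : ℕ}

theorem precH_add (hd₀ : 0 < d) (hd : d ≤ γ * n) (hwrap : a + d < 3 * γ * n) :
    PrecH γ n a (a + d) := by
  rw [PrecH, Nat.mul_assoc 2, Nat.mul_assoc 3] at *
  omega

theorem precH_add_sub (hd : d ≤ γ * n) (ha : a < 3 * γ * n) (hwrap : 3 * γ * n ≤ a + d) :
    PrecH γ n a (a + d - 3 * γ * n) := by
  rw [PrecH, Nat.mul_assoc 2, Nat.mul_assoc 3] at *
  omega

theorem precH_mod_add_mod (i : ℕ) (hd₀ : 0 < d) (hd : d ≤ γ * n) :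
    PrecH γ n (i % (3 * γ * n)) ((i + d) % (3 * γ * n)) := by
  have hN : d < 3 * γ * n := by rw [Nat.mul_assoc]; omega
  rw [Nat.add_mod_eq_ite, Nat.mod_eq_of_lt hN]
  split_ifs with hwrap
  · exact precH_add_sub hd (Nat.mod_lt i (by omega)) hwrap
  · exact precH_add hd₀ hd (not_le.mp hwrap)

end PrecH

theorem hash_preserves_order_general
    (γ n : ℕ)
    (i i' : ℕ) (hlt : i < i') (hdiff : i' - i ≤ γ * n) :
    PrecH γ n (i % (3 * γ * n)) (i' % (3 * γ * n)) := by
  simpa only [Nat.add_sub_cancel' hlt.le] using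
    precH_mod_add_mod i (Nat.sub_pos_of_lt hlt) hdiff

/-- The hash `h(i) = i mod 3γn` preserves the order of round numbers whose
difference is at most `γn`. -/
theorem hash_preserves_order
    (γ n : ℕ) (hγ : 0 < γ) (hn : 0 < n)
    (i i' : ℕ) (hlt : i < i') (hdiff : i' - i ≤ γ * n) :
    PrecH γ n (i % (3 * γ * n)) (i' % (3 * γ * n)) :=
  hash_preserves_order_general γ n i i' hlt hdiff
end
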